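/- Let Z_k be the output of the weighted greedy algorithm (Algorithm 2) after k steps. Then f(Z_k) ≥ Σ_{i=1}^k λ^{i−1} f({v_i^*}), where v_1^*, …, v_k^* are the elements of an optimal size-k set Z_k^* ordered so that f({v_i^*}) is nonincreasing. -/

import Mathlib

/-- Sort the values of a multiset of reals in nonincreasing order. -/
noncomputable def descSort (s : Multiset ℝ) : List ℝ :=
  (s.sort (· ≤ ·)).reverse

/-- `∑_j λ^j * l_j` for a list `l` (0-based exponents). -/
noncomputable def smoothSum (lam : ℝ) (l : List ℝ) : ℝ :=
  ∑ j ∈ Finset.range l.length, lam ^ j * l.getD j 0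

/-- The smoothed weighted coverage function:
`f(Z) = ∑_{n<N} ∑_j λ^{j} v^{(n)}(z_{g^{(n)}(j)})` where for each aspect `n` the
values `v^{(n)}(z)`, `z ∈ Z`, are sorted nonincreasingly. -/
noncomputable def smoothCov {Ω : Type*} (lam : ℝ) (N : ℕ) (v : Ω → ℕ → ℝ)
    (Z : Finset Ω) : ℝ :=
  ∑ n ∈ Finset.range N, smoothSum lam (descSort (Z.val.map (fun z => v z n)))

open scoped Classical in
/-- The greedy weighted dot product `w_Z^T v(z)`, where `w_Z^{(n)} = λ^{c(n)}`
and `c(n)` is the number of elements of `Z` with positive `n`-th weight. -/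
noncomputable def wdot {Ω : Type*} (lam : ℝ) (N : ℕ) (v : Ω → ℕ → ℝ)
    (Z : Finset Ω) (z : Ω) : ℝ :=
  ∑ n ∈ Finset.range N, lam ^ (Z.filter (fun y => 0 < v y n)).card * v z n

lemma smoothSum_nil (lam : ℝ) : smoothSum lam [] = 0 := by simp [smoothSum]

lemma smoothSum_cons (lam a : ℝ) (l : List ℝ) :
    smoothSum lam (a :: l) = a + lam * smoothSum lam l := by
  rw [smoothSum, List.length_cons, Finset.sum_range_succ']
  simp only [smoothSum, Finset.mul_sum, pow_succ]
  rw [add_comm]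
  congr 1
  · simp [List.getD]
  · apply Finset.sum_congr rfl
    intro i _
    simp [List.getD]
    ring

lemma descSort_sorted (s : Multiset ℝ) : (descSort s).Pairwise (· ≥ ·) := by
  rw [descSort, List.pairwise_reverse]
  exact Multiset.pairwise_sort s (· ≤ ·)

lemma descSort_coe (s : Multiset ℝ) : (descSort s : Multiset ℝ) = s := by
  rw [descSort, Multiset.coe_reverse, Multiset.sort_eq]

lemma descSort_cons (a : ℝ) (s : Multiset ℝ) :
    descSort (a ::ₘ s) = List.orderedInsert (· ≥ ·) a (descSort s) := by
  refine List.Perm.eq_of_pairwise' (descSort_sorted _)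
    ((descSort_sorted s).orderedInsert a _) ?_
  rw [← Multiset.coe_eq_coe, descSort_coe,
    Multiset.coe_eq_coe.2 (List.perm_orderedInsert _ a (descSort s))]
  rw [← Multiset.cons_coe, descSort_coe]

lemma smoothSum_nonneg {lam : ℝ} (hlam0 : 0 ≤ lam) (l : List ℝ)
    (h : ∀ x ∈ l, 0 ≤ x) : 0 ≤ smoothSum lam l := by
  apply Finset.sum_nonneg
  intro j hj
  rw [Finset.mem_range] at hj
  rw [List.getD_eq_getElem l 0 hj]
  exact mul_nonneg (pow_nonneg hlam0 _) (h _ (List.getElem_mem _))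

lemma smoothSum_bounded {lam a : ℝ} (hlam0 : 0 ≤ lam) (hlam1 : lam ≤ 1) :
    ∀ (l : List ℝ), l.Pairwise (· ≥ ·) → (∀ x ∈ l, 0 ≤ x) → (∀ x ∈ l, x ≤ a) →
    (1 - lam) * smoothSum lam l ≤ a * (1 - lam ^ (l.countP (fun x => decide (0 < x)))) := by
  intro l
  induction l with
  | nil => intro _ _ _; simp [smoothSum_nil]
  | cons b l ih =>
    intro hs h0 hb
    have hb0 : 0 ≤ b := h0 b (List.mem_cons_self)
    have hba : b ≤ a := hb b (List.mem_cons_self)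
    have hs' : l.Pairwise (· ≥ ·) := hs.of_cons
    by_cases hbpos : 0 < b
    · have hm : (b :: l).countP (fun x => decide (0 < x)) =
          l.countP (fun x => decide (0 < x)) + 1 := by
        rw [List.countP_cons_of_pos]; simp [hbpos]
      have hIH := ih hs' (fun x hx => h0 x (List.mem_cons_of_mem b hx))
        (fun x hx => hb x (List.mem_cons_of_mem b hx))
      rw [hm, smoothSum_cons, pow_succ]
      have h1 := mul_le_mul_of_nonneg_left hIH hlam0
      have h2 := mul_le_mul_of_nonneg_right hba (by linarith : (0:ℝ) ≤ 1 - lam)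
      nlinarith
    · have hb0' : b = 0 := le_antisymm (not_lt.1 hbpos) hb0
      have hall : ∀ x ∈ l, x = 0 := by
        intro x hx
        exact le_antisymm (hb0' ▸ (List.rel_of_pairwise_cons hs hx))
          (h0 x (List.mem_cons_of_mem b hx))
      have hg : smoothSum lam l = 0 := by
        apply Finset.sum_eq_zero
        intro j hj
        rw [Finset.mem_range] at hj
        rw [List.getD_eq_getElem l 0 hj, hall _ (List.getElem_mem _), mul_zero]
      have hc : (b :: l).countP (fun x => decide (0 < x)) = 0 := by
        rw [List.countP_eq_zero]
        intro x hx
        rcases List.mem_cons.1 hx with h | h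
        · simp [h, hb0']
        · simp [hall x h]
      rw [hc, smoothSum_cons, hg, hb0']
      simp

lemma smoothSum_orderedInsert {lam a : ℝ} (hlam0 : 0 ≤ lam) (hlam1 : lam ≤ 1)
    (ha : 0 ≤ a) :
    ∀ (l : List ℝ), l.Pairwise (· ≥ ·) → (∀ x ∈ l, 0 ≤ x) →
    smoothSum lam l + lam ^ (l.countP (fun x => decide (0 < x))) * a ≤
      smoothSum lam (List.orderedInsert (· ≥ ·) a l) := by
  intro l
  induction l with
  | nil => intro _ _; simp [smoothSum_nil, smoothSum_cons, List.orderedInsert]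
  | cons b l ih =>
    intro hs h0
    have hb0 : 0 ≤ b := h0 b (List.mem_cons_self)
    have hs' : l.Pairwise (· ≥ ·) := hs.of_cons
    rw [List.orderedInsert]
    by_cases hab : a ≥ b
    · rw [if_pos hab, smoothSum_cons lam a (b :: l)]
      have hbd := smoothSum_bounded (a := a) hlam0 hlam1 (b :: l) hs h0 (by
        intro x hx
        rcases List.mem_cons.1 hx with h | h
        · exact h ▸ hab
        · exact le_trans (List.rel_of_pairwise_cons hs h) hab)
      linarith
    · rw [if_neg hab, smoothSum_cons, smoothSum_cons]
      have hbpos : 0 < b := lt_of_le_of_lt ha (not_le.1 hab)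
      have hm : (b :: l).countP (fun x => decide (0 < x)) =
          l.countP (fun x => decide (0 < x)) + 1 := by
        rw [List.countP_cons_of_pos]; simp [hbpos]
      have hIH := ih hs' (fun x hx => h0 x (List.mem_cons_of_mem b hx))
      have := mul_le_mul_of_nonneg_left hIH hlam0
      rw [hm]
      rw [pow_succ]
      nlinarith

open scoped Classical in
lemma smoothSum_descSort_cons {lam a : ℝ} (hlam0 : 0 ≤ lam) (hlam1 : lam ≤ 1)
    (ha : 0 ≤ a) (s : Multiset ℝ) (hs : ∀ x ∈ s, 0 ≤ x) :
    smoothSum lam (descSort s) + lam ^ (Multiset.countP (fun x => 0 < x) s) * a ≤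
      smoothSum lam (descSort (a ::ₘ s)) := by
  rw [descSort_cons]
  have hc : Multiset.countP (fun x : ℝ => 0 < x) s =
      (descSort s).countP (fun x => decide (0 < x)) := by
    conv_lhs => rw [← descSort_coe s]
    exact Multiset.coe_countP _ _
  rw [hc]
  refine smoothSum_orderedInsert hlam0 hlam1 ha (descSort s) (descSort_sorted s) ?_
  intro x hx
  exact hs x (by rw [← descSort_coe s]; exact hx)

open scoped Classical in
lemma smoothCov_insert {Ω : Type*} [DecidableEq Ω] {lam : ℝ} (hlam0 : 0 ≤ lam)
    (hlam1 : lam ≤ 1) (N : ℕ) (v : Ω → ℕ → ℝ) (hv : ∀ z n, 0 ≤ v z n)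
    (Z : Finset Ω) (z : Ω) (hz : z ∉ Z) :
    smoothCov lam N v Z + wdot lam N v Z z ≤ smoothCov lam N v (insert z Z) := by
  rw [smoothCov, smoothCov, wdot, ← Finset.sum_add_distrib]
  apply Finset.sum_le_sum
  intro n _
  rw [Finset.insert_val_of_notMem hz, Multiset.map_cons]
  have hexp : (Z.filter (fun y => 0 < v y n)).card =
      Multiset.countP (fun x : ℝ => 0 < x) (Z.val.map (fun z => v z n)) := by
    rw [Multiset.countP_map]
    rfl
  rw [hexp]
  refine smoothSum_descSort_cons hlam0 hlam1 (hv z n) _ ?_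
  intro x hx
  rcases Multiset.mem_map.1 hx with ⟨y, _, rfl⟩
  exact hv y n

lemma smoothCov_empty {Ω : Type*} (lam : ℝ) (N : ℕ) (v : Ω → ℕ → ℝ) :
    smoothCov lam N v ∅ = 0 := by
  simp [smoothCov, descSort, smoothSum_nil]

lemma smoothCov_singleton {Ω : Type*} (lam : ℝ) (N : ℕ) (v : Ω → ℕ → ℝ) (z : Ω) :
    smoothCov lam N v {z} = ∑ n ∈ Finset.range N, v z n := by
  apply Finset.sum_congr rfl
  intro n _
  have h1 : ({z} : Finset Ω).val.map (fun y => v y n) = {v z n} := by simp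
  rw [h1]
  have h2 : descSort {v z n} = [v z n] := by
    have : ({v z n} : Multiset ℝ) = (v z n) ::ₘ 0 := rfl
    rw [this, descSort_cons]
    simp [descSort, List.orderedInsert]
  rw [h2, smoothSum_cons, smoothSum_nil]
  ring

open scoped Classical in
lemma wdot_lower {Ω : Type*} {lam : ℝ} (hlam0 : 0 ≤ lam) (hlam1 : lam ≤ 1)
    (N : ℕ) (v : Ω → ℕ → ℝ) (hv : ∀ z n, 0 ≤ v z n) (Z : Finset Ω) (z : Ω)
    {i : ℕ} (hZ : Z.card ≤ i) :
    lam ^ i * smoothCov lam N v {z} ≤ wdot lam N v Z z := by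
  rw [smoothCov_singleton, wdot, Finset.mul_sum]
  apply Finset.sum_le_sum
  intro n _
  have hcard : (Z.filter (fun y => 0 < v y n)).card ≤ i :=
    le_trans (Finset.card_filter_le _ _) hZ
  exact mul_le_mul_of_nonneg_right (pow_le_pow_of_le_one hlam0 hlam1 hcard) (hv z n)

/-- the output `Z_k = {c 0, …, c (k-1)}` of the weighted greedy
algorithm satisfies `f(Z_k) ≥ ∑_i λ^{i} f({v_i^*})`, where the `v_i^* = e i`
enumerate an optimal size-`k` set `Zstar` with `f {e i}` nonincreasing. -/
theorem weighted_greedy_lower_bound {Ω : Type*} [DecidableEq Ω] (lam : ℝ)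
    (hlam0 : 0 ≤ lam) (hlam1 : lam ≤ 1) (N k : ℕ) (v : Ω → ℕ → ℝ)
    (hv : ∀ z n, 0 ≤ v z n) (T : Finset Ω) (c : ℕ → Ω)
    (hmem : ∀ i < k, c i ∈ T)
    (hnew : ∀ i < k, c i ∉ (Finset.range i).image c)
    (hgreedy : ∀ i < k, ∀ z ∈ T, z ∉ (Finset.range i).image c →
      wdot lam N v ((Finset.range i).image c) z ≤
        wdot lam N v ((Finset.range i).image c) (c i))
    (Zstar : Finset Ω) (hZT : Zstar ⊆ T) (hcard : Zstar.card = k)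
    (hopt : ∀ Z ⊆ T, Z.card = k → smoothCov lam N v Z ≤ smoothCov lam N v Zstar)
    (e : Fin k → Ω) (hinj : Function.Injective e)
    (himg : Finset.univ.image e = Zstar)
    (hanti : Antitone fun i => smoothCov lam N v {e i}) :
    ∑ i : Fin k, lam ^ (i : ℕ) * smoothCov lam N v {e i} ≤
      smoothCov lam N v ((Finset.range k).image c) := by
  classical
  set E : ℕ → ℝ := fun i => if h : i < k then smoothCov lam N v {e ⟨i, h⟩} else 0 with hE
  have key : ∀ m, m ≤ k → ∑ i ∈ Finset.range m, lam ^ i * E i ≤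
      smoothCov lam N v ((Finset.range m).image c) := by
    intro m
    induction m with
    | zero => intro _; simp [smoothCov_empty]
    | succ m ih =>
      intro hm1
      have hmk : m < k := hm1
      have hZm : ((Finset.range m).image c).card ≤ m :=
        le_trans Finset.card_image_le (by simp)
      -- find j ≤ m with e j not yet selected
      have hex : ∃ j : Fin k, (j : ℕ) ≤ m ∧ e j ∉ (Finset.range m).image c := by
        by_contra hcon
        push_neg at hcon
        have hsub : (Finset.Iic (⟨m, hmk⟩ : Fin k)).image e ⊆ (Finset.range m).image c := by
          intro x hx
          rcases Finset.mem_image.1 hx with ⟨j, hj, rfl⟩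
          exact hcon j (by have := Finset.mem_Iic.1 hj; exact Fin.le_def.1 this)
        have hc1 : ((Finset.Iic (⟨m, hmk⟩ : Fin k)).image e).card = m + 1 := by
          rw [Finset.card_image_of_injective _ hinj, Fin.card_Iic]
        have := Finset.card_le_card hsub
        omega
      obtain ⟨j, hjm, hjnot⟩ := hex
      have hjT : e j ∈ T := by
        apply hZT
        rw [← himg]
        exact Finset.mem_image_of_mem e (Finset.mem_univ j)
      have h1 : wdot lam N v ((Finset.range m).image c) (e j) ≤
          wdot lam N v ((Finset.range m).image c) (c m) :=
        hgreedy m hmk (e j) hjT hjnot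
      have h2 : lam ^ m * smoothCov lam N v {e j} ≤
          wdot lam N v ((Finset.range m).image c) (e j) :=
        wdot_lower hlam0 hlam1 N v hv _ _ hZm
      have h3 : smoothCov lam N v {e ⟨m, hmk⟩} ≤ smoothCov lam N v {e j} :=
        hanti (by rw [Fin.le_def]; exact hjm)
      have h4 : smoothCov lam N v ((Finset.range m).image c) +
          wdot lam N v ((Finset.range m).image c) (c m) ≤
          smoothCov lam N v ((Finset.range (m + 1)).image c) := by
        rw [Finset.range_add_one, Finset.image_insert]
        exact smoothCov_insert hlam0 hlam1 N v hv _ _ (hnew m hmk)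
      have hEm : E m = smoothCov lam N v {e ⟨m, hmk⟩} := by
        simp [hE, hmk]
      rw [Finset.sum_range_succ, hEm]
      have h5 := ih (le_of_lt hmk)
      have h6 : lam ^ m * smoothCov lam N v {e ⟨m, hmk⟩} ≤
          wdot lam N v ((Finset.range m).image c) (c m) := by
        calc lam ^ m * smoothCov lam N v {e ⟨m, hmk⟩}
            ≤ lam ^ m * smoothCov lam N v {e j} :=
              mul_le_mul_of_nonneg_left h3 (pow_nonneg hlam0 m)
          _ ≤ _ := le_trans h2 h1
      linarith
  have hsum : ∑ i : Fin k, lam ^ (i : ℕ) * smoothCov lam N v {e i} =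
      ∑ i ∈ Finset.range k, lam ^ i * E i := by
    rw [← Fin.sum_univ_eq_sum_range (fun i => lam ^ i * E i) k]
    apply Finset.sum_congr rfl
    intro i _
    simp [hE, i.isLt]
  rw [hsum]
  exact key k le_rfl
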